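/- arXiv:2207.11694 — 3 statements merged into one kernel-verified Lean document; each statement's English description precedes it below -/
import Mathlib

section
/- Let v : Set Ω → ℝ be a game on a finite set Ω of n players with v(∅)=0. Define the Shapley value φ(a) = ∑_{S ⊆ Ω\{a}} (|S|!(n-|S|-1)!/n!)·(v(S∪{a}) - v(S)). Then ∑_{a∈Ω} φ(a) = v(Ω) - v(∅) (efficiency axiom). -/
open Finset

/-- The Shapley value of player `a` in the game `v`. -/
noncomputable def shapley {Ω : Type*} [Fintype Ω] [DecidableEq Ω]
    (v : Finset Ω → ℝ) (a : Ω) : ℝ :=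
  ∑ S ∈ (Finset.univ.erase a).powerset,
    ((S.card.factorial * (Fintype.card Ω - S.card - 1).factorial : ℕ) : ℝ)
      / ((Fintype.card Ω).factorial : ℝ) * (v (insert a S) - v S)

private lemma key_nat (n k : ℕ) (hk : 1 ≤ k) (hkn : k < n) :
    k * ((k-1).factorial * (n-(k-1)-1).factorial)
      = (n-k) * (k.factorial * (n-k-1).factorial) := by
  obtain ⟨m, rfl⟩ : ∃ m, k = m + 1 := ⟨k - 1, by omega⟩
  obtain ⟨j, rfl⟩ : ∃ j, n = (m+1) + (j+1) := ⟨n - m - 2, by omega⟩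
  have h1 : m + 1 - 1 = m := by omega
  have h2 : (m+1) + (j+1) - m - 1 = j + 1 := by omega
  have h3 : (m+1) + (j+1) - (m+1) = j + 1 := by omega
  have h4 : (m+1) + (j+1) - (m+1) - 1 = j := by omega
  rw [h1, h2, h3]
  simp only [Nat.add_sub_cancel]
  rw [Nat.factorial_succ m, Nat.factorial_succ j]
  ring

/-- Efficiency axiom of the Shapley value. -/
theorem shapley_efficiency {Ω : Type*} [Fintype Ω] [DecidableEq Ω]
    (v : Finset Ω → ℝ) (hn : 1 ≤ Fintype.card Ω) (hv : v ∅ = 0) :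
    ∑ a : Ω, shapley v a = v Finset.univ - v ∅ := by
  classical
  set n := Fintype.card Ω with hncard
  set w : ℕ → ℝ := fun k =>
    ((k.factorial * (n - k - 1).factorial : ℕ) : ℝ) / (n.factorial : ℝ) with hw
  have hwdef : ∀ k, w k
      = ((k.factorial * (n - k - 1).factorial : ℕ) : ℝ) / (n.factorial : ℝ) := fun k => rfl
  have hps : ∀ a : Ω, ((univ : Finset Ω).erase a).powerset
      = univ.powerset.filter (fun S => a ∉ S) := by
    intro a; ext S; simp [Finset.subset_erase]
  have hfacne : (n.factorial : ℝ) ≠ 0 := Nat.cast_ne_zero.2 (Nat.factorial_ne_zero n)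
  have hfac : ∀ m : ℕ, 1 ≤ m → m * (m-1).factorial = m.factorial := by
    intro m hm
    obtain ⟨j, rfl⟩ : ∃ j, m = j + 1 := ⟨m - 1, by omega⟩
    simp [Nat.factorial_succ]
  have hone : (n : ℝ) * (((n-1).factorial : ℕ) : ℝ) / (n.factorial : ℝ) = 1 := by
    rw [div_eq_iff hfacne, one_mul, ← Nat.cast_mul]
    exact_mod_cast hfac n hn
  have step1 : ∀ a : Ω, shapley v a =
      (∑ T ∈ univ.powerset.filter (fun T => a ∈ T), w (T.card - 1) * v T)
      - (∑ S ∈ univ.powerset.filter (fun S => a ∉ S), w S.card * v S) := by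
    intro a
    have h0 : shapley v a =
        (∑ S ∈ ((univ : Finset Ω).erase a).powerset, w S.card * v (insert a S))
        - (∑ S ∈ ((univ : Finset Ω).erase a).powerset, w S.card * v S) := by
      rw [shapley, ← Finset.sum_sub_distrib]
      exact Finset.sum_congr rfl fun S _ => by rw [mul_sub]
    rw [h0, hps a]
    congr 1
    refine Finset.sum_bij' (fun S _ => insert a S) (fun T _ => T.erase a) ?_ ?_ ?_ ?_ ?_
    · intro S hS
      simp only [mem_filter, mem_powerset] at hS ⊢
      exact ⟨subset_univ _, mem_insert_self a S⟩
    · intro T hT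
      simp only [mem_filter, mem_powerset] at hT ⊢
      exact ⟨subset_univ _, notMem_erase a T⟩
    · intro S hS
      simp only [mem_filter, mem_powerset] at hS
      exact Finset.erase_insert hS.2
    · intro T hT
      simp only [mem_filter, mem_powerset] at hT
      exact Finset.insert_erase hT.2
    · intro S hS
      simp only [mem_filter, mem_powerset] at hS
      simp only [Finset.card_insert_of_notMem hS.2, Nat.add_sub_cancel]
  have stepA : ∑ a : Ω, ∑ T ∈ univ.powerset.filter (fun T => a ∈ T), w (T.card - 1) * v T
      = ∑ T ∈ (univ : Finset Ω).powerset, (T.card : ℝ) * (w (T.card - 1) * v T) := by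
    simp only [Finset.sum_filter]
    rw [Finset.sum_comm]
    refine Finset.sum_congr rfl fun T _ => ?_
    rw [← Finset.sum_filter, Finset.filter_mem_eq_inter, Finset.univ_inter,
      Finset.sum_const, nsmul_eq_mul]
  have stepB : ∑ a : Ω, ∑ S ∈ univ.powerset.filter (fun S => a ∉ S), w S.card * v S
      = ∑ S ∈ (univ : Finset Ω).powerset, ((n - S.card : ℕ) : ℝ) * (w S.card * v S) := by
    simp only [Finset.sum_filter]
    rw [Finset.sum_comm]
    refine Finset.sum_congr rfl fun S _ => ?_
    rw [← Finset.sum_filter]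
    have hfc : (univ.filter (fun a => a ∉ S)) = Sᶜ := by ext x; simp
    rw [hfc, Finset.sum_const, nsmul_eq_mul, Finset.card_compl]
  calc ∑ a : Ω, shapley v a
      = ∑ T ∈ (univ : Finset Ω).powerset,
          ((T.card : ℝ) * (w (T.card - 1) * v T)
            - ((n - T.card : ℕ) : ℝ) * (w T.card * v T)) := by
        simp only [step1]
        rw [Finset.sum_sub_distrib, stepA, stepB, ← Finset.sum_sub_distrib]
    _ = ∑ T ∈ (univ : Finset Ω).powerset,
          ((if T = (univ : Finset Ω) then v T else 0)
            - (if T = (∅ : Finset Ω) then v T else 0)) := by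
        refine Finset.sum_congr rfl fun T hT => ?_
        have hsub : T ⊆ univ := mem_powerset.1 hT
        have hk : T.card ≤ n := by
          simpa [hncard] using Finset.card_le_card hsub
        rcases eq_or_ne T.card 0 with h0 | h0
        · have hTe : T = ∅ := Finset.card_eq_zero.1 h0
          have hTu : T ≠ univ := by
            intro h
            rw [hTe] at h
            have h' := congrArg Finset.card h.symm
            rw [Finset.card_univ, Finset.card_empty, ← hncard] at h'
            omega
          rw [if_neg hTu, if_pos hTe, h0]
          have hwn : (n : ℝ) * w 0 = 1 := by
            rw [hwdef]
            simp only [Nat.factorial_zero, one_mul, Nat.sub_zero]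
            rw [← mul_div_assoc]
            exact hone
          simp only [Nat.sub_zero, Nat.cast_zero, zero_mul, zero_sub]
          rw [← mul_assoc, hwn, one_mul]
        · rcases eq_or_ne T.card n with hkn | hkn
          · have hTu : T = univ := by
              apply Finset.eq_univ_of_card
              rw [hkn, hncard]
            have hTe : T ≠ ∅ := by
              intro h; rw [h, Finset.card_empty] at hkn; omega
            rw [if_pos hTu, if_neg hTe]
            have hwn : (T.card : ℝ) * w (T.card - 1) = 1 := by
              rw [hwdef, hkn]
              have h2 : n - (n - 1) - 1 = 0 := by omega
              rw [h2]
              simp only [Nat.factorial_zero, mul_one]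
              rw [← mul_div_assoc]
              exact hone
            have h3 : ((n - T.card : ℕ) : ℝ) = 0 := by rw [hkn]; simp
            rw [h3, zero_mul, sub_zero, ← mul_assoc, hwn, one_mul, sub_zero]
          · have hk1 : 1 ≤ T.card := by omega
            have hklt : T.card < n := by omega
            have hTu : T ≠ univ := by
              intro h; rw [h, Finset.card_univ, ← hncard] at hkn; exact hkn rfl
            have hTe : T ≠ ∅ := by
              intro h; rw [h, Finset.card_empty] at h0; exact h0 rfl
            rw [if_neg hTu, if_neg hTe, sub_zero]
            have hcoef : (T.card : ℝ) * w (T.card - 1) = ((n - T.card : ℕ) : ℝ) * w T.card := by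
              rw [hwdef, hwdef, ← mul_div_assoc, ← mul_div_assoc]
              congr 1
              exact_mod_cast key_nat n T.card hk1 hklt
            rw [← mul_assoc, ← mul_assoc, hcoef, sub_self]
    _ = v univ - v ∅ := by
        rw [Finset.sum_sub_distrib,
          Finset.sum_ite_eq' _ (univ : Finset Ω) v, Finset.sum_ite_eq' _ (∅ : Finset Ω) v]
        simp
end

section
/- For a finite player set Ω, |Ω| = n ≥ 2, and game v : Finset Ω → ℝ, the Shapley interaction index I_{ab} = ∑_{S ⊆ Ω\{a,b}} (|S|!(n-|S|-2)!/(n-1)!)·[v(S∪{a,b}) - v(S∪{a}) - v(S∪{b}) + v(S)] equals the expectation 𝔼_{S ⊆ Ω\{a,b}}[v(S∪{a,b}) - v(S∪{a}) - v(S∪{b}) + v(S)] where S of size s is drawn with probability s!(n-s-2)!/(n-1)! per subset, and this also equals φ'(S_{ab}) - φ₁(a) - φ₂(b), where φ'(S_{ab}) is the Shapley value of the coalition {a,b} treated as a single player in the (n-1)-player game on Ω' = (Ω\{a,b}) ∪ {S_{ab}}, φ₁(a) is the Shapley value of a in the game restricted to Ω\{b}, and φ₂(b) is the Shapley value of b in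 the game restricted to Ω\{a}. -/
open Finset

/-- The Shapley interaction index between players `a` and `b`. -/
noncomputable def interactionIndex {Ω : Type*} [Fintype Ω] [DecidableEq Ω]
    (v : Finset Ω → ℝ) (a b : Ω) : ℝ :=
  ∑ S ∈ ((Finset.univ.erase a).erase b).powerset,
    ((S.card.factorial * (Fintype.card Ω - S.card - 2).factorial : ℕ) : ℝ)
      / (((Fintype.card Ω - 1).factorial : ℕ) : ℝ) *
      (v (insert a (insert b S)) - v (insert a S) - v (insert b S) + v S)

/-- The Shapley interaction index equals the expectation of the pairwise marginal
contribution (where a coalition `S` of size `s` is drawn with probability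
`s!(n-s-2)!/(n-1)!`), and equals `φ'(S_{ab}) - φ₁(a) - φ₂(b)`, where the coalition
`{a,b}` is treated as a single player (here represented by `none` in the player set
`Option {x // x ≠ a ∧ x ≠ b}`), and `φ₁`, `φ₂` are the Shapley values of `a`, `b`
in the games restricted to `Ω \ {b}` and `Ω \ {a}`, respectively. -/
theorem interaction_index_eq {Ω : Type*} [Fintype Ω] [DecidableEq Ω]
    (v : Finset Ω → ℝ) (a b : Ω) (hab : a ≠ b) (hn : 2 ≤ Fintype.card Ω) :
    (interactionIndex v a b =
      ∑ s ∈ Finset.range (Fintype.card Ω - 1),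
        ∑ S ∈ ((Finset.univ.erase a).erase b).powerset.filter (fun S => S.card = s),
          (((s.factorial * (Fintype.card Ω - s - 2).factorial : ℕ) : ℝ) /
            (((Fintype.card Ω - 1).factorial : ℕ) : ℝ)) *
          (v (insert a (insert b S)) - v (insert a S) - v (insert b S) + v S))
    ∧
    interactionIndex v a b =
      shapley (fun T : Finset (Option {x : Ω // x ≠ a ∧ x ≠ b}) =>
          if none ∈ T then v (insert b (T.image (fun o => o.elim a Subtype.val)))
          else v (T.image (fun o => o.elim a Subtype.val))) (none)
      - shapley (fun T : Finset {x : Ω // x ≠ b} => v (T.image Subtype.val)) ⟨a, hab⟩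
      - shapley (fun T : Finset {x : Ω // x ≠ a} => v (T.image Subtype.val)) ⟨b, hab.symm⟩ := by
  have hba : b ≠ a := hab.symm
  set n := Fintype.card Ω with hn'
  have hPcard : ((Finset.univ.erase a).erase b).card = n - 2 := by
    rw [Finset.card_erase_of_mem (Finset.mem_erase.2 ⟨hba, Finset.mem_univ b⟩),
      Finset.card_erase_of_mem (Finset.mem_univ a), Finset.card_univ]
    omega
  have hmemP : ∀ S : Finset Ω,
      S ∈ ((Finset.univ.erase a).erase b).powerset ↔ a ∉ S ∧ b ∉ S := by
    intro S
    simp only [Finset.mem_powerset, Finset.subset_erase, Finset.subset_univ, true_and]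
  have hc2 : Fintype.card {x : Ω // x ≠ a ∧ x ≠ b} = n - 2 := by
    rw [Fintype.card_subtype]
    have h : Finset.univ.filter (fun x : Ω => x ≠ a ∧ x ≠ b)
        = (Finset.univ.erase a).erase b := by
      ext x; simp [Finset.mem_erase]; tauto
    rw [h, hPcard]
  have hc1b : Fintype.card {x : Ω // x ≠ b} = n - 1 := by
    rw [Fintype.card_subtype]
    have h : Finset.univ.filter (fun x : Ω => x ≠ b) = Finset.univ.erase b := by
      ext x; simp [Finset.mem_erase]
    rw [h, Finset.card_erase_of_mem (Finset.mem_univ b), Finset.card_univ]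
  have hc1a : Fintype.card {x : Ω // x ≠ a} = n - 1 := by
    rw [Fintype.card_subtype]
    have h : Finset.univ.filter (fun x : Ω => x ≠ a) = Finset.univ.erase a := by
      ext x; simp [Finset.mem_erase]
    rw [h, Finset.card_erase_of_mem (Finset.mem_univ a), Finset.card_univ]
  have hcO : Fintype.card (Option {x : Ω // x ≠ a ∧ x ≠ b}) = n - 1 := by
    rw [Fintype.card_option, hc2]; omega
  -- part 1
  have part1 : interactionIndex v a b =
      ∑ s ∈ Finset.range (n - 1),
        ∑ S ∈ ((Finset.univ.erase a).erase b).powerset.filter (fun S => S.card = s),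
          (((s.factorial * (n - s - 2).factorial : ℕ) : ℝ) /
            (((n - 1).factorial : ℕ) : ℝ)) *
          (v (insert a (insert b S)) - v (insert a S) - v (insert b S) + v S) := by
    have maps : ∀ S ∈ ((Finset.univ.erase a).erase b).powerset,
        S.card ∈ Finset.range (n - 1) := by
      intro S hS
      have := Finset.card_le_card (Finset.mem_powerset.1 hS)
      rw [hPcard] at this
      simp only [Finset.mem_range]; omega
    rw [interactionIndex, ← Finset.sum_fiberwise_of_maps_to maps]
    exact Finset.sum_congr rfl fun s _ => Finset.sum_congr rfl fun S hS => by
      rw [(Finset.mem_filter.1 hS).2]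
  refine ⟨part1, ?_⟩
  -- φ₁
  have h1 : shapley (fun T : Finset {x : Ω // x ≠ b} => v (T.image Subtype.val)) ⟨a, hab⟩
      = ∑ S ∈ ((Finset.univ.erase a).erase b).powerset,
        ((S.card.factorial * (n - S.card - 2).factorial : ℕ) : ℝ)
          / (((n - 1).factorial : ℕ) : ℝ) * (v (insert a S) - v S) := by
    rw [shapley]
    refine Finset.sum_nbij' (fun T => T.image Subtype.val)
      (fun S => S.subtype (fun x => x ≠ b)) ?_ ?_ ?_ ?_ ?_
    · intro T hT
      rw [Finset.mem_powerset, Finset.subset_erase] at hT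
      rw [hmemP]
      constructor
      · intro ha
        obtain ⟨x, hx, hxa⟩ := Finset.mem_image.1 ha
        exact hT.2 (by rwa [show x = (⟨a, hab⟩ : {x : Ω // x ≠ b}) from Subtype.ext hxa] at hx)
      · intro hb
        obtain ⟨x, _, hxb⟩ := Finset.mem_image.1 hb
        exact x.2 hxb
    · intro S hS
      rw [hmemP] at hS
      rw [Finset.mem_powerset, Finset.subset_erase]
      refine ⟨Finset.subset_univ _, ?_⟩
      simp [Finset.mem_subtype, hS.1]
    · intro T hT
      ext x
      constructor
      · intro h
        obtain ⟨y, hy, hxy⟩ := Finset.mem_image.1 (Finset.mem_subtype.1 h)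
        rwa [Subtype.ext hxy] at hy
      · intro h
        exact Finset.mem_subtype.2 (Finset.mem_image.2 ⟨x, h, rfl⟩)
    · intro S hS
      rw [hmemP] at hS
      ext x
      constructor
      · intro h
        obtain ⟨y, hy, hxy⟩ := Finset.mem_image.1 h
        exact hxy ▸ Finset.mem_subtype.1 hy
      · intro hx
        exact Finset.mem_image.2 ⟨⟨x, fun h => hS.2 (h ▸ hx)⟩, Finset.mem_subtype.2 hx, rfl⟩
    · intro T hT
      rw [Finset.image_insert, Finset.card_image_of_injective _ Subtype.val_injective,
        hc1b]
      have h : n - 1 - T.card - 1 = n - T.card - 2 := by omega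
      rw [h]
  -- φ₂
  have h2 : shapley (fun T : Finset {x : Ω // x ≠ a} => v (T.image Subtype.val)) ⟨b, hab.symm⟩
      = ∑ S ∈ ((Finset.univ.erase a).erase b).powerset,
        ((S.card.factorial * (n - S.card - 2).factorial : ℕ) : ℝ)
          / (((n - 1).factorial : ℕ) : ℝ) * (v (insert b S) - v S) := by
    rw [shapley]
    refine Finset.sum_nbij' (fun T => T.image Subtype.val)
      (fun S => S.subtype (fun x => x ≠ a)) ?_ ?_ ?_ ?_ ?_
    · intro T hT
      rw [Finset.mem_powerset, Finset.subset_erase] at hT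
      rw [hmemP]
      constructor
      · intro ha
        obtain ⟨x, _, hxa⟩ := Finset.mem_image.1 ha
        exact x.2 hxa
      · intro hb
        obtain ⟨x, hx, hxb⟩ := Finset.mem_image.1 hb
        exact hT.2 (by rwa [show x = (⟨b, hab.symm⟩ : {x : Ω // x ≠ a}) from Subtype.ext hxb] at hx)
    · intro S hS
      rw [hmemP] at hS
      rw [Finset.mem_powerset, Finset.subset_erase]
      refine ⟨Finset.subset_univ _, ?_⟩
      simp [Finset.mem_subtype, hS.2]
    · intro T hT
      ext x
      constructor
      · intro h
        obtain ⟨y, hy, hxy⟩ := Finset.mem_image.1 (Finset.mem_subtype.1 h)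
        rwa [Subtype.ext hxy] at hy
      · intro h
        exact Finset.mem_subtype.2 (Finset.mem_image.2 ⟨x, h, rfl⟩)
    · intro S hS
      rw [hmemP] at hS
      ext x
      constructor
      · intro h
        obtain ⟨y, hy, hxy⟩ := Finset.mem_image.1 h
        exact hxy ▸ Finset.mem_subtype.1 hy
      · intro hx
        exact Finset.mem_image.2 ⟨⟨x, fun h => hS.1 (h ▸ hx)⟩, Finset.mem_subtype.2 hx, rfl⟩
    · intro T hT
      rw [Finset.image_insert, Finset.card_image_of_injective _ Subtype.val_injective,
        hc1a]
      have h : n - 1 - T.card - 1 = n - T.card - 2 := by omega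
      rw [h]
  -- φ'
  have finj : Function.Injective
      (fun o : Option {x : Ω // x ≠ a ∧ x ≠ b} => o.elim a Subtype.val) := by
    rintro (_ | x) (_ | y) h
    · rfl
    · exact absurd h.symm y.2.1
    · exact absurd h x.2.1
    · exact congrArg some (Subtype.ext h)
  have h' : shapley (fun T : Finset (Option {x : Ω // x ≠ a ∧ x ≠ b}) =>
          if none ∈ T then v (insert b (T.image (fun o => o.elim a Subtype.val)))
          else v (T.image (fun o => o.elim a Subtype.val))) (none)
      = ∑ S ∈ ((Finset.univ.erase a).erase b).powerset,
        ((S.card.factorial * (n - S.card - 2).factorial : ℕ) : ℝ)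
          / (((n - 1).factorial : ℕ) : ℝ) * (v (insert b (insert a S)) - v S) := by
    rw [shapley]
    refine Finset.sum_nbij' (fun T => T.image (fun o => o.elim a Subtype.val))
      (fun S => (S.subtype (fun x => x ≠ a ∧ x ≠ b)).image some) ?_ ?_ ?_ ?_ ?_
    · intro T hT
      rw [Finset.mem_powerset, Finset.subset_erase] at hT
      rw [hmemP]
      constructor
      · intro ha
        obtain ⟨o, ho, hoa⟩ := Finset.mem_image.1 ha
        match o with
        | none => exact hT.2 ho
        | some x => exact x.2.1 hoa
      · intro hb
        obtain ⟨o, ho, hob⟩ := Finset.mem_image.1 hb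
        match o with
        | none => exact hab hob
        | some x => exact x.2.2 hob
    · intro S hS
      rw [Finset.mem_powerset, Finset.subset_erase]
      refine ⟨Finset.subset_univ _, ?_⟩
      simp
    · intro T hT
      rw [Finset.mem_powerset, Finset.subset_erase] at hT
      ext o
      match o with
      | none =>
        constructor
        · intro h
          obtain ⟨x, _, hx⟩ := Finset.mem_image.1 h
          cases hx
        · intro h; exact absurd h hT.2
      | some x =>
        constructor
        · intro h
          obtain ⟨y, hy, hxy⟩ := Finset.mem_image.1 h
          have hyx : y = x := Option.some.inj hxy
          subst hyx
          obtain ⟨o, ho, hoy⟩ := Finset.mem_image.1 (Finset.mem_subtype.1 hy)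
          match o with
          | none => exact absurd hoy.symm y.2.1
          | some z => rwa [show z = y from Subtype.ext hoy] at ho
        · intro hx
          exact Finset.mem_image.2
            ⟨x, Finset.mem_subtype.2 (Finset.mem_image.2 ⟨some x, hx, rfl⟩), rfl⟩
    · intro S hS
      rw [hmemP] at hS
      show Finset.image _ (Finset.image some _) = S
      rw [Finset.image_image]
      have heq : ((fun o : Option {x : Ω // x ≠ a ∧ x ≠ b} => o.elim a Subtype.val) ∘ some)
          = Subtype.val := rfl
      rw [heq]
      ext x
      constructor
      · intro h
        obtain ⟨y, hy, hxy⟩ := Finset.mem_image.1 h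
        exact hxy ▸ Finset.mem_subtype.1 hy
      · intro hx
        exact Finset.mem_image.2 ⟨⟨x, fun h => hS.1 (h ▸ hx), fun h => hS.2 (h ▸ hx)⟩,
          Finset.mem_subtype.2 hx, rfl⟩
    · intro T hT
      rw [Finset.mem_powerset, Finset.subset_erase] at hT
      rw [Finset.image_insert, Finset.card_image_of_injective _ finj, hcO]
      rw [if_pos (Finset.mem_insert_self _ _), if_neg hT.2]
      have h : n - 1 - T.card - 1 = n - T.card - 2 := by omega
      rw [h]
      rfl
  rw [h', h1, h2, interactionIndex, ← Finset.sum_sub_distrib, ← Finset.sum_sub_distrib]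
  refine Finset.sum_congr rfl fun S hS => ?_
  rw [Finset.insert_comm, ← hn']
  ring
end

section
/- Fix z ∈ ℝᶜ, index i, and τ ∈ ℝ. Let pᵢ = exp(zᵢ)/∑ⱼexp(zⱼ) and define the symmetrized noisy probability p̄ᵢ(τ) = (1/2)[exp(zᵢ+τ)/(exp(zᵢ+τ) + ∑_{j≠i}exp(zⱼ)) + exp(zᵢ-τ)/(exp(zᵢ-τ) + ∑_{j≠i}exp(zⱼ))]. Then p̄ᵢ(τ) - pᵢ = (ω-1)pᵢ(1-2pᵢ)(1-pᵢ)/(2(ω-1)pᵢ(1-pᵢ) + 1) where ω = cosh(τ); hence p̄ᵢ(τ) ≥ pᵢ if pᵢ ≤ 1/2 and p̄ᵢ(τ) ≤ pᵢ if pᵢ ≥ 1/2. -/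
open Finset Real

set_option maxHeartbeats 1000000 in
lemma vr_aux (E S a : ℝ) (hE : 0 < E) (hS : 0 < S) (ha : 0 < a)
    (hD : 2 * ((a + a⁻¹) / 2 - 1) * (E / (E + S)) * (1 - E / (E + S)) + 1 ≠ 0) :
    (1/2) * (E * a / (E * a + S) + E / a / (E / a + S)) - E / (E + S)
      = ((a + a⁻¹) / 2 - 1) * (E / (E + S)) * (1 - 2 * (E / (E + S))) * (1 - E / (E + S))
        / (2 * ((a + a⁻¹) / 2 - 1) * (E / (E + S)) * (1 - E / (E + S)) + 1) := by
  have h1 : E * a + S ≠ 0 := by positivity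
  have h2 : E / a + S ≠ 0 := by positivity
  have h3 : E + S ≠ 0 := by positivity
  rw [eq_div_iff hD]
  field_simp
  ring

/-- The symmetrized noisy softmax probability `p̄ᵢ(τ)` satisfies
`p̄ᵢ(τ) - pᵢ = (ω-1)pᵢ(1-2pᵢ)(1-pᵢ)/(2(ω-1)pᵢ(1-pᵢ)+1)` with `ω = cosh τ`;
hence `p̄ᵢ(τ) ≥ pᵢ` if `pᵢ ≤ 1/2` and `p̄ᵢ(τ) ≤ pᵢ` if `pᵢ ≥ 1/2`. -/
theorem vr_noise_balances {c : ℕ} (hc : 2 ≤ c) (z : Fin c → ℝ) (i : Fin c) (τ : ℝ) :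
    let p := Real.exp (z i) / ∑ j, Real.exp (z j)
    let S := ∑ j ∈ Finset.univ.erase i, Real.exp (z j)
    let pbar := (1 / 2) * (Real.exp (z i + τ) / (Real.exp (z i + τ) + S)
      + Real.exp (z i - τ) / (Real.exp (z i - τ) + S))
    let ω := Real.cosh τ
    pbar - p = (ω - 1) * p * (1 - 2 * p) * (1 - p)
        / (2 * (ω - 1) * p * (1 - p) + 1)
      ∧ (p ≤ 1 / 2 → p ≤ pbar) ∧ (1 / 2 ≤ p → pbar ≤ p) := by
  intro p S pbar ω
  have hE : 0 < Real.exp (z i) := Real.exp_pos _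
  obtain ⟨j, hj⟩ : ∃ j : Fin c, j ≠ i := by
    have : Nontrivial (Fin c) := Fin.nontrivial_iff_two_le.mpr hc
    exact exists_ne i
  have hS : 0 < S := Finset.sum_pos (fun k _ => Real.exp_pos _)
    ⟨j, Finset.mem_erase.2 ⟨hj, Finset.mem_univ j⟩⟩
  have hsum : ∑ j, Real.exp (z j) = Real.exp (z i) + S :=
    (Finset.add_sum_erase _ _ (Finset.mem_univ i)).symm
  have ha : 0 < Real.exp τ := Real.exp_pos _
  have hp : p = Real.exp (z i) / (Real.exp (z i) + S) := by
    simp only [p, hsum]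
  have hω : ω = (Real.exp τ + (Real.exp τ)⁻¹) / 2 := by
    simp [ω, Real.cosh_eq, Real.exp_neg]
  have hω1 : 1 ≤ ω := Real.one_le_cosh τ
  have hpb : pbar = (1 / 2) * (Real.exp (z i) * Real.exp τ /
      (Real.exp (z i) * Real.exp τ + S)
      + Real.exp (z i) / Real.exp τ / (Real.exp (z i) / Real.exp τ + S)) := by
    simp only [pbar, Real.exp_add, Real.exp_sub]
  have hp0 : 0 < p := by rw [hp]; positivity
  have hp1 : p < 1 := by
    rw [hp, div_lt_one (by positivity)]; linarith
  have hD : 0 < 2 * (ω - 1) * p * (1 - p) + 1 := by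
    nlinarith [mul_pos hp0 (sub_pos.2 hp1)]
  have hD' : 2 * ((Real.exp τ + (Real.exp τ)⁻¹) / 2 - 1) *
      (Real.exp (z i) / (Real.exp (z i) + S)) *
      (1 - Real.exp (z i) / (Real.exp (z i) + S)) + 1 ≠ 0 := by
    rw [← hp, ← hω]; exact ne_of_gt hD
  have key : pbar - p = (ω - 1) * p * (1 - 2 * p) * (1 - p)
      / (2 * (ω - 1) * p * (1 - p) + 1) := by
    rw [hpb, hp, hω]
    exact vr_aux _ _ _ hE hS ha hD'
  refine ⟨key, ?_, ?_⟩
  · intro h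
    have : 0 ≤ (ω - 1) * p * (1 - 2 * p) * (1 - p) / (2 * (ω - 1) * p * (1 - p) + 1) := by
      apply div_nonneg _ hD.le
      have h2 : 0 ≤ 1 - 2 * p := by linarith
      exact mul_nonneg (mul_nonneg (mul_nonneg (by linarith) hp0.le) h2) (by linarith)
    linarith [key]
  · intro h
    have : (ω - 1) * p * (1 - 2 * p) * (1 - p) / (2 * (ω - 1) * p * (1 - p) + 1) ≤ 0 := by
      apply div_nonpos_of_nonpos_of_nonneg _ hD.le
      have h2 : 1 - 2 * p ≤ 0 := by linarith
      exact mul_nonpos_of_nonpos_of_nonneg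
        (mul_nonpos_of_nonneg_of_nonpos (mul_nonneg (by linarith) hp0.le) h2) (by linarith)
    linarith [key]
end
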